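/- arXiv:2303.00115 — 4 statements merged into one kernel-verified Lean document; each statement's English description precedes it below -/
import Mathlib

section
/- Fix a, b ∈ ℝ and define H(x) = x³ + a x + b and F(x) = (x⁴ − 2 a x² − 8 b x + a²) / (4 (x³ + a x + b)). Then for every x ∈ ℝ with x³ + a x + b ≠ 0, the identity H(F(x)) = (1/4)·[F'(x)]²·H(x) holds. -/
/-! Write `F = N / (4H)` with `N = x⁴ - 2ax² - 8bx + a²`. By the quotient rule `F' = W / (4H²)`
for the Wronskian `W = N'H - NH'`, so after clearing denominators the identity is the polynomial
identity `W² = N³ + 16aNH² + 64bH³`, i.e. `64H³ · H(N / 4H) = W²`. -/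

theorem tangent_wronskian_sq {R : Type*} [CommRing R] (a b x : R) :
    ((4 * x ^ 3 - 4 * a * x - 8 * b) * (x ^ 3 + a * x + b) -
        (x ^ 4 - 2 * a * x ^ 2 - 8 * b * x + a ^ 2) * (3 * x ^ 2 + a)) ^ 2 =
      (x ^ 4 - 2 * a * x ^ 2 - 8 * b * x + a ^ 2) ^ 3 +
        16 * a * (x ^ 4 - 2 * a * x ^ 2 - 8 * b * x + a ^ 2) * (x ^ 3 + a * x + b) ^ 2 +
        64 * b * (x ^ 3 + a * x + b) ^ 3 := by
  ring

theorem cubic_div_eq_of_sq_eq {K : Type*} [Field K] [CharZero K] {a b n h w : K} (hh : h ≠ 0)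
    (hw : w ^ 2 = n ^ 3 + 16 * a * n * h ^ 2 + 64 * b * h ^ 3) :
    (n / (4 * h)) ^ 3 + a * (n / (4 * h)) + b = 1 / 4 * (w / (4 * h ^ 2)) ^ 2 * h := by
  field_simp
  linear_combination -hw

theorem hasDerivAt_tangentMap {𝕜 : Type*} [NontriviallyNormedField 𝕜] [CharZero 𝕜]
    (a b x : 𝕜) (hx : x ^ 3 + a * x + b ≠ 0) :
    HasDerivAt
      (fun x => (x ^ 4 - 2 * a * x ^ 2 - 8 * b * x + a ^ 2) / (4 * (x ^ 3 + a * x + b)))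
      (((4 * x ^ 3 - 4 * a * x - 8 * b) * (x ^ 3 + a * x + b) -
        (x ^ 4 - 2 * a * x ^ 2 - 8 * b * x + a ^ 2) * (3 * x ^ 2 + a)) /
        (4 * (x ^ 3 + a * x + b) ^ 2)) x := by
  have hN : HasDerivAt (fun x => x ^ 4 - 2 * a * x ^ 2 - 8 * b * x + a ^ 2)
      (4 * x ^ 3 - 4 * a * x - 8 * b) x :=
    ((((hasDerivAt_pow 4 x).sub ((hasDerivAt_pow 2 x).const_mul (2 * a))).sub
        ((hasDerivAt_id x).const_mul (8 * b))).add_const (a ^ 2)).congr_deriv (by push_cast; ring)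
  have hH : HasDerivAt (fun x => 4 * (x ^ 3 + a * x + b)) (4 * (3 * x ^ 2 + a)) x :=
    ((((hasDerivAt_pow 3 x).add ((hasDerivAt_id x).const_mul a)).add_const b).const_mul
      4).congr_deriv (by push_cast; ring)
  refine (hN.div hH (mul_ne_zero (by norm_num) hx)).congr_deriv ?_
  field_simp

/-- The tangent-line map on x-coordinates of the elliptic curve `y² = x³ + ax + b`
satisfies the functional identity `H ∘ F = (1/4) (F')² H`. -/
theorem elliptic_tangent_identity (a b : ℝ) (H F : ℝ → ℝ)
    (hH : H = fun x => x ^ 3 + a * x + b)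
    (hF : F = fun x => (x ^ 4 - 2 * a * x ^ 2 - 8 * b * x + a ^ 2) /
      (4 * (x ^ 3 + a * x + b))) :
    ∀ x : ℝ, x ^ 3 + a * x + b ≠ 0 →
      H (F x) = (1 / 4) * (deriv F x) ^ 2 * H x := by
  intro x hx
  subst hH hF
  rw [(hasDerivAt_tangentMap a b x hx).deriv]
  exact cubic_div_eq_of_sq_eq hx (tangent_wronskian_sq a b x)
end

section
/- Fix ℓ ∈ [0,1) and define F_ℓ(x) = 4x(1−x)(1−ℓx) / (1−ℓx²)² and H_ℓ(x) = x(1−x)(1−ℓx). Then for every x ∈ ℝ with 1 − ℓx² ≠ 0, the identity H_ℓ(F_ℓ(x)) = (1/4)·[F_ℓ'(x)]²·H_ℓ(x) holds. -/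
/-!
Writing `D = 1 - ℓx²`, both `1 - F_ℓ` and `1 - ℓF_ℓ` are perfect squares,
`((1 - 2x + ℓx²)/D)²` and `((1 - 2ℓx + ℓx²)/D)²`, while
`F_ℓ' = 4 (1 - 2x + ℓx²)(1 - 2ℓx + ℓx²)/D³`. Hence
`H_ℓ(F_ℓ) = F_ℓ (1 - F_ℓ)(1 - ℓF_ℓ)` and `(1/4) F_ℓ'² H_ℓ` are the same rational function.
-/

namespace KatsuraFukuda

noncomputable def map (ℓ x : ℝ) : ℝ :=
  4 * x * (1 - x) * (1 - ℓ * x) / (1 - ℓ * x ^ 2) ^ 2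

variable {ℓ x : ℝ}

theorem one_sub_map (hx : 1 - ℓ * x ^ 2 ≠ 0) :
    1 - map ℓ x = ((1 - 2 * x + ℓ * x ^ 2) / (1 - ℓ * x ^ 2)) ^ 2 := by
  rw [map, one_sub_div (pow_ne_zero 2 hx), div_pow]
  ring

theorem one_sub_mul_map (hx : 1 - ℓ * x ^ 2 ≠ 0) :
    1 - ℓ * map ℓ x = ((1 - 2 * ℓ * x + ℓ * x ^ 2) / (1 - ℓ * x ^ 2)) ^ 2 := by
  rw [map, mul_div_assoc', one_sub_div (pow_ne_zero 2 hx), div_pow]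
  ring

theorem hasDerivAt_map (hx : 1 - ℓ * x ^ 2 ≠ 0) :
    HasDerivAt (map ℓ)
      (4 * (1 - 2 * x + ℓ * x ^ 2) * (1 - 2 * ℓ * x + ℓ * x ^ 2) / (1 - ℓ * x ^ 2) ^ 3) x := by
  have hnum : HasDerivAt (fun x : ℝ => 4 * x * (1 - x) * (1 - ℓ * x))
      (4 * (1 - 2 * x - 2 * ℓ * x + 3 * ℓ * x ^ 2)) x :=
    ((((hasDerivAt_id x).const_mul 4).fun_mul ((hasDerivAt_id x).const_sub 1)).fun_mul
      (((hasDerivAt_id x).const_mul ℓ).const_sub 1)).congr_deriv (by simp only [id]; ring)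
  have hden : HasDerivAt (fun x : ℝ => (1 - ℓ * x ^ 2) ^ 2)
      (-4 * ℓ * x * (1 - ℓ * x ^ 2)) x :=
    ((((hasDerivAt_pow 2 x).const_mul ℓ).const_sub 1).fun_pow 2).congr_deriv (by ring)
  refine (hnum.fun_div hden (pow_ne_zero 2 hx)).congr_deriv ?_
  field_simp
  ring

end KatsuraFukuda

theorem katsura_fukuda_identity_general (ℓ : ℝ)
    (F H : ℝ → ℝ)
    (hF : F = fun x => 4 * x * (1 - x) * (1 - ℓ * x) / (1 - ℓ * x ^ 2) ^ 2)
    (hH : H = fun x => x * (1 - x) * (1 - ℓ * x)) :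
    ∀ x : ℝ, 1 - ℓ * x ^ 2 ≠ 0 →
      H (F x) = (1 / 4) * (deriv F x) ^ 2 * H x := by
  intro x hx
  obtain rfl : F = KatsuraFukuda.map ℓ := hF
  subst hH
  beta_reduce
  rw [(KatsuraFukuda.hasDerivAt_map hx).deriv, KatsuraFukuda.one_sub_map hx,
    KatsuraFukuda.one_sub_mul_map hx, KatsuraFukuda.map]
  field_simp

/-- The Katsura-Fukuda map `F_ℓ` satisfies `H_ℓ ∘ F_ℓ = (1/4) (F_ℓ')² H_ℓ`
with `H_ℓ(x) = x(1-x)(1-ℓx)`, wherever `1 - ℓx² ≠ 0`. -/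
theorem katsura_fukuda_identity (ℓ : ℝ) (hℓ : ℓ ∈ Set.Ico (0 : ℝ) 1)
    (F H : ℝ → ℝ)
    (hF : F = fun x => 4 * x * (1 - x) * (1 - ℓ * x) / (1 - ℓ * x ^ 2) ^ 2)
    (hH : H = fun x => x * (1 - x) * (1 - ℓ * x)) :
    ∀ x : ℝ, 1 - ℓ * x ^ 2 ≠ 0 →
      H (F x) = (1 / 4) * (deriv F x) ^ 2 * H x :=
  katsura_fukuda_identity_general ℓ F H hF hH
end

section
/- Let D ⊆ ℝ, let F : ℝ → ℝ be differentiable at every point of D with F(D) ⊆ D, and let H : ℝ → ℝ satisfy H(F(x)) = (1/4)·[F'(x)]²·H(x) for all x ∈ D. Suppose x₁, x₂, …, x_p ∈ D is a period-p orbit of F (i.e., F(x_n) = x_{n+1} for 1 ≤ n ≤ p−1 and F(x_p) = x₁) with H(x_n) ≠ 0 for every n. Then (∏_{n=1}^p F'(x_n))² = 4^p; equivalently, the multiplier λ = ∏_{n=1}^p F'(x_n) of the orbit satisfies |λ| = 2^p. -/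
/-! Multiplying `H (F xₙ) = ¼ F'(xₙ)² H (xₙ)` along the orbit, the left-hand side is a cyclic
relabelling of `∏ H (xₙ)`, which is nonzero and cancels, leaving `4⁻ᵖ λ² = 1`. -/

open Finset

theorem prod_range_comp_eq_of_periodic_orbit {α M : Type*} [CommMonoid M] (F : α → α)
    (g : α → M) {p : ℕ} {x : ℕ → α} (horb : ∀ n, n + 1 < p → F (x n) = x (n + 1))
    (hper : F (x (p - 1)) = x 0) :
    ∏ n ∈ range p, g (F (x n)) = ∏ n ∈ range p, g (x n) := by
  cases p with
  | zero => simp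
  | succ q =>
    rw [Nat.add_sub_cancel] at hper
    rw [prod_range_succ, prod_range_succ', hper]
    congr 1
    exact prod_congr rfl fun n hn => by rw [horb n (by simpa using hn)]

theorem prod_range_eq_one_of_comp_eq_mul {α M : Type*} [CommMonoidWithZero M]
    [Nontrivial M] [IsCancelMulZero M]
    (F : α → α) (g H : α → M) {p : ℕ} {x : ℕ → α}
    (horb : ∀ n, n + 1 < p → F (x n) = x (n + 1)) (hper : F (x (p - 1)) = x 0)
    (hrel : ∀ n < p, H (F (x n)) = g (x n) * H (x n)) (hH : ∀ n < p, H (x n) ≠ 0) :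
    ∏ n ∈ range p, g (x n) = 1 := by
  have hprod : ∏ n ∈ range p, H (x n) ≠ 0 :=
    prod_ne_zero_iff.mpr fun n hn => hH n (mem_range.mp hn)
  rw [← mul_eq_left₀ hprod, mul_comm, ← prod_mul_distrib]
  calc ∏ n ∈ range p, g (x n) * H (x n)
      = ∏ n ∈ range p, H (F (x n)) := prod_congr rfl fun n hn => (hrel n (mem_range.mp hn)).symm
    _ = ∏ n ∈ range p, H (x n) := prod_range_comp_eq_of_periodic_orbit F H horb hper

theorem multiplier_from_functional_relation_general (D : Set ℝ) (F H : ℝ → ℝ)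
    (hrel : ∀ x ∈ D, H (F x) = (1 / 4) * (deriv F x) ^ 2 * H x)
    (p : ℕ) (x : ℕ → ℝ)
    (hxD : ∀ n < p, x n ∈ D)
    (horb : ∀ n, n + 1 < p → F (x n) = x (n + 1))
    (hper : F (x (p - 1)) = x 0)
    (hH : ∀ n < p, H (x n) ≠ 0) :
    (∏ n ∈ Finset.range p, deriv F (x n)) ^ 2 = 4 ^ p ∧
      |∏ n ∈ Finset.range p, deriv F (x n)| = 2 ^ p := by
  have hcocycle : ∏ n ∈ range p, (1 / 4) * deriv F (x n) ^ 2 = 1 :=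
    prod_range_eq_one_of_comp_eq_mul F (fun y => (1 / 4) * deriv F y ^ 2) H horb hper
      (fun n hn => hrel (x n) (hxD n hn)) hH
  rw [prod_mul_distrib, prod_const, card_range, prod_pow, one_div, inv_pow,
    inv_mul_eq_one₀ (by positivity)] at hcocycle
  have hsq : (∏ n ∈ range p, deriv F (x n)) ^ 2 = 4 ^ p := hcocycle.symm
  refine ⟨hsq, ?_⟩
  have h4 : (4 : ℝ) ^ p = (2 ^ p) ^ 2 := by rw [← pow_mul, mul_comm, pow_mul]; norm_num
  rwa [h4, sq_eq_sq_iff_abs_eq_abs, abs_of_nonneg (by positivity : (0 : ℝ) ≤ 2 ^ p)] at hsq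

/-- If `H ∘ F = (1/4) (F')² H` on a forward-invariant set `D`, then every
period-`p` orbit in `D` avoiding the zeros of `H` has multiplier `λ` with
`λ² = 4^p`, i.e. `|λ| = 2^p`. Here the orbit is indexed as `x 0, …, x (p-1)`. -/
theorem multiplier_from_functional_relation (D : Set ℝ) (F H : ℝ → ℝ)
    (hdiff : ∀ x ∈ D, DifferentiableAt ℝ F x)
    (hmaps : Set.MapsTo F D D)
    (hrel : ∀ x ∈ D, H (F x) = (1 / 4) * (deriv F x) ^ 2 * H x)
    (p : ℕ) (hp : 1 ≤ p) (x : ℕ → ℝ)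
    (hxD : ∀ n < p, x n ∈ D)
    (horb : ∀ n, n + 1 < p → F (x n) = x (n + 1))
    (hper : F (x (p - 1)) = x 0)
    (hH : ∀ n < p, H (x n) ≠ 0) :
    (∏ n ∈ Finset.range p, deriv F (x n)) ^ 2 = 4 ^ p ∧
      |∏ n ∈ Finset.range p, deriv F (x n)| = 2 ^ p :=
  multiplier_from_functional_relation_general D F H hrel p x hxD horb hper hH
end

section
/- Let f, g : ℝ → ℝ be continuous maps such that f agrees with a continuously differentiable function f_L on (−∞,0] and with a continuously differentiable function f_R on [0,∞), and g agrees with continuously differentiable functions g_L on (−∞,0] and g_R on [0,∞), with f_L'(0), f_R'(0), g_L'(0), g_R'(0) all nonzero and f(0) > 0, g(0) > 0. Suppose h : ℝ → ℝ satisfies h ∘ f = g ∘ h on a neighbourhood of 0, h(0) = 0, h maps (0,∞) into (0,∞) and (−∞,0) into (−∞,0), h is differentiable at the point f(0) with h'(f(0)) ≠ 0, and h has nonzero one-sided derivatives at 0 from the right and from the left. Then h is differentiable at 0 (i.e., the two one-sided derivatives of h at 0 coincide) if and only if f_L'(0)/f_R'(0) = g_L'(0)/g_R'(0). -/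
/-!
Differentiate the conjugacy `h ∘ f = g ∘ h` at `0` from each side separately. As `h` is
differentiable at `f 0`, the left side has the one-sided derivatives `h'(f 0) · f_L'(0)` and
`h'(f 0) · f_R'(0)`; as `h` preserves the sides of `0`, the right side has
`g_L'(0) · d_L` and `g_R'(0) · d_R`. Solving for `d_L` and `d_R` and cancelling `h'(f 0) ≠ 0`
shows that `d_L = d_R` exactly when the slope ratios agree.
-/

open Set Topology

theorem Set.MapsTo.Ici_of_Ioi {α β : Type*} [PartialOrder α] [PartialOrder β] {h : α → β} {a : α}
    {b : β} (ha : h a = b) (hh : MapsTo h (Ioi a) (Ioi b)) : MapsTo h (Ici a) (Ici b) := by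
  subst ha
  rw [← Ioi_insert, ← Ioi_insert]
  exact hh.insert a

theorem Set.MapsTo.Iic_of_Iio {α β : Type*} [PartialOrder α] [PartialOrder β] {h : α → β} {a : α}
    {b : β} (ha : h a = b) (hh : MapsTo h (Iio a) (Iio b)) : MapsTo h (Iic a) (Iic b) := by
  subst ha
  rw [← Iio_insert, ← Iio_insert]
  exact hh.insert a

section

variable {𝕜 : Type*} [NontriviallyNormedField 𝕜]

theorem hasDerivWithinAt_of_eqOn_of_differentiableAt {f f₁ : 𝕜 → 𝕜} {s : Set 𝕜} {x : 𝕜}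
    (hf₁ : DifferentiableAt 𝕜 f₁ x) (heq : EqOn f f₁ s) (hx : x ∈ s) :
    HasDerivWithinAt f (deriv f₁ x) s x :=
  hf₁.hasDerivAt.hasDerivWithinAt.congr heq (heq hx)

theorem mul_eq_mul_of_eventually_semiconj {f g h : 𝕜 → 𝕜} {s t : Set 𝕜} {x a b c d : 𝕜}
    (hs : UniqueDiffWithinAt 𝕜 s x) (hx : x ∈ s)
    (hconj : ∀ᶠ y in 𝓝[s] x, h (f y) = g (h y))
    (hf : HasDerivWithinAt f a s x) (hh : HasDerivAt h b (f x))
    (hg : HasDerivWithinAt g c t (h x)) (hhs : HasDerivWithinAt h d s x)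
    (hst : MapsTo h s t) :
    b * a = c * d := by
  have hleft : HasDerivWithinAt (h ∘ f) (b * a) s x := hh.comp_hasDerivWithinAt x hf
  have hright : HasDerivWithinAt (h ∘ f) (c * d) s x :=
    (hg.comp x hhs hst).congr_of_eventuallyEq_of_mem hconj hx
  exact hs.eq_deriv s hleft hright

end

theorem eq_iff_div_eq_div_of_mul_eq_mul {K : Type*} [Field K] {b aL aR cL cR dL dR : K} (hb : b ≠ 0) (haR : aR ≠ 0)
    (hcL : cL ≠ 0) (hcR : cR ≠ 0) (hL : b * aL = cL * dL) (hR : b * aR = cR * dR) :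
    dL = dR ↔ aL / aR = cL / cR := by
  rw [div_eq_div_iff haR hcR]
  constructor
  · rintro rfl
    apply mul_left_cancel₀ hb
    linear_combination cR * hL - cL * hR
  · intro H
    apply mul_left_cancel₀ (mul_ne_zero hcL hcR)
    linear_combination cL * hR - cR * hL + b * H

theorem conjugacy_differentiable_at_kink_iff_slope_ratios_general
    (f g fL fR gL gR : ℝ → ℝ)
    (hfL : ContDiff ℝ 1 fL) (hfR : ContDiff ℝ 1 fR)
    (hgL : ContDiff ℝ 1 gL) (hgR : ContDiff ℝ 1 gR)
    (hfLeq : ∀ x ≤ (0 : ℝ), f x = fL x) (hfReq : ∀ x ≥ (0 : ℝ), f x = fR x)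
    (hgLeq : ∀ x ≤ (0 : ℝ), g x = gL x) (hgReq : ∀ x ≥ (0 : ℝ), g x = gR x)
    (hfR0 : deriv fR 0 ≠ 0)
    (hgL0 : deriv gL 0 ≠ 0) (hgR0 : deriv gR 0 ≠ 0)
    (h : ℝ → ℝ)
    (hconj : ∀ᶠ x in nhds (0 : ℝ), h (f x) = g (h x))
    (h0 : h 0 = 0)
    (hpos : Set.MapsTo h (Set.Ioi 0) (Set.Ioi 0))
    (hneg : Set.MapsTo h (Set.Iio 0) (Set.Iio 0))
    (hdiff : DifferentiableAt ℝ h (f 0))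
    (hd0 : deriv h (f 0) ≠ 0)
    (dR dL : ℝ)
    (hdR : HasDerivWithinAt h dR (Set.Ici 0) 0)
    (hdL : HasDerivWithinAt h dL (Set.Iic 0) 0) :
    dL = dR ↔ deriv fL 0 / deriv fR 0 = deriv gL 0 / deriv gR 0 := by
  have hfL' : HasDerivWithinAt f (deriv fL 0) (Iic 0) 0 :=
    hasDerivWithinAt_of_eqOn_of_differentiableAt (hfL.differentiable one_ne_zero 0) hfLeq
      self_mem_Iic
  have hfR' : HasDerivWithinAt f (deriv fR 0) (Ici 0) 0 :=
    hasDerivWithinAt_of_eqOn_of_differentiableAt (hfR.differentiable one_ne_zero 0) hfReq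
      self_mem_Ici
  have hgL' : HasDerivWithinAt g (deriv gL 0) (Iic 0) 0 :=
    hasDerivWithinAt_of_eqOn_of_differentiableAt (hgL.differentiable one_ne_zero 0) hgLeq
      self_mem_Iic
  have hgR' : HasDerivWithinAt g (deriv gR 0) (Ici 0) 0 :=
    hasDerivWithinAt_of_eqOn_of_differentiableAt (hgR.differentiable one_ne_zero 0) hgReq
      self_mem_Ici
  have keyL : deriv h (f 0) * deriv fL 0 = deriv gL 0 * dL :=
    mul_eq_mul_of_eventually_semiconj (uniqueDiffWithinAt_Iic 0) self_mem_Iic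
      (nhdsWithin_le_nhds hconj) hfL' hdiff.hasDerivAt (by rwa [h0]) hdL (hneg.Iic_of_Iio h0)
  have keyR : deriv h (f 0) * deriv fR 0 = deriv gR 0 * dR :=
    mul_eq_mul_of_eventually_semiconj (uniqueDiffWithinAt_Ici 0) self_mem_Ici
      (nhdsWithin_le_nhds hconj) hfR' hdiff.hasDerivAt (by rwa [h0]) hdR (hpos.Ici_of_Ioi h0)
  exact eq_iff_div_eq_div_of_mul_eq_mul hd0 hfR0 hgL0 hgR0 keyL keyR

/-- A conjugacy `h` between two piecewise-smooth maps `f`, `g` with kinks at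
`0` (where `f = f_L` on `(-∞,0]`, `f = f_R` on `[0,∞)`, similarly for `g`),
fixing `0`, preserving the sides of `0`, differentiable at `f 0 > 0` with
nonzero derivative, and with nonzero one-sided derivatives at `0`, is
differentiable at `0` (the one-sided derivatives coincide) if and only if the
slope ratios at the kinks agree: `f_L'(0)/f_R'(0) = g_L'(0)/g_R'(0)`. -/
theorem conjugacy_differentiable_at_kink_iff_slope_ratios
    (f g fL fR gL gR : ℝ → ℝ)
    (hfc : Continuous f) (hgc : Continuous g)
    (hfL : ContDiff ℝ 1 fL) (hfR : ContDiff ℝ 1 fR)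
    (hgL : ContDiff ℝ 1 gL) (hgR : ContDiff ℝ 1 gR)
    (hfLeq : ∀ x ≤ (0 : ℝ), f x = fL x) (hfReq : ∀ x ≥ (0 : ℝ), f x = fR x)
    (hgLeq : ∀ x ≤ (0 : ℝ), g x = gL x) (hgReq : ∀ x ≥ (0 : ℝ), g x = gR x)
    (hfL0 : deriv fL 0 ≠ 0) (hfR0 : deriv fR 0 ≠ 0)
    (hgL0 : deriv gL 0 ≠ 0) (hgR0 : deriv gR 0 ≠ 0)
    (hf0 : 0 < f 0) (hg0 : 0 < g 0)
    (h : ℝ → ℝ)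
    (hconj : ∀ᶠ x in nhds (0 : ℝ), h (f x) = g (h x))
    (h0 : h 0 = 0)
    (hpos : Set.MapsTo h (Set.Ioi 0) (Set.Ioi 0))
    (hneg : Set.MapsTo h (Set.Iio 0) (Set.Iio 0))
    (hdiff : DifferentiableAt ℝ h (f 0))
    (hd0 : deriv h (f 0) ≠ 0)
    (dR dL : ℝ)
    (hdR : HasDerivWithinAt h dR (Set.Ici 0) 0) (hdRne : dR ≠ 0)
    (hdL : HasDerivWithinAt h dL (Set.Iic 0) 0) (hdLne : dL ≠ 0) :
    dL = dR ↔ deriv fL 0 / deriv fR 0 = deriv gL 0 / deriv gR 0 :=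
  conjugacy_differentiable_at_kink_iff_slope_ratios_general f g fL fR gL gR hfL hfR hgL hgR hfLeq
    hfReq hgLeq hgReq hfR0 hgL0 hgR0 h hconj h0 hpos hneg hdiff hd0 dR dL hdR hdL
end
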